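/- arXiv:2402.14237 — 4 statements merged into one kernel-verified Lean document; each statement's English description precedes it below -/
import Mathlib

section
/- Let n ≥ 1, α > 0 and q < 0. Then ∫_{ℝⁿ} (1 − (q/α)|x|^α)^{1/q − n/α − 1} dx = π^{n/2} B(n/α, 1 − 1/q) / ((α/n)·(−q/α)^{n/α}·Γ(n/2 + 1)) (note that 1 − (q/α)|x|^α = 1 + (|q|/α)|x|^α > 0 for all x). Equivalently, with Z(α,q) := (α/n)(−q/α)^{n/α}Γ(n/2+1)/(π^{n/2}B(n/α, 1 − 1/q)), the function g_{α,q}(x) = Z(α,q)^{-1}·(1 − (q/α)|x|^α)^{1/q − n/α − 1} is a probability density on ℝⁿ. -/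
/-!
In polar coordinates the integral becomes `|B₁| · n · ∫₀^∞ r^(n-1) (1 + c r^α)^(-(n/α + b)) dr`
with `c = -q/α` and `b = 1 - 1/q`. The substitution `t = c r^α` turns the radial integral into
`α⁻¹ c^(-n/α) ∫₀^∞ t^(a-1) (1 + t)^(-(a+b)) dt` with `a = n/α`, a beta integral of the second kind,
which `t = v / (1 - v)` maps onto Euler's integral `∫₀¹ v^(a-1) (1-v)^(b-1) dv = B(a, b)`.
-/

open MeasureTheory Real Set ProbabilityTheory

theorem integral_Ioo_rpow_mul_one_sub_rpow {a b : ℝ} (ha : 0 < a) (hb : 0 < b) :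
    ∫ x in Ioo (0 : ℝ) 1, x ^ (a - 1) * (1 - x) ^ (b - 1) = beta a b := by
  have hcomplex : Complex.betaIntegral a b
      = ((∫ x in (0 : ℝ)..1, x ^ (a - 1) * (1 - x) ^ (b - 1) : ℝ) : ℂ) := by
    rw [← intervalIntegral.integral_ofReal]
    refine intervalIntegral.integral_congr fun x hx => ?_
    rw [uIcc_of_le zero_le_one] at hx
    push_cast
    rw [Complex.ofReal_cpow hx.1, Complex.ofReal_cpow (sub_nonneg.mpr hx.2)]
    push_cast
    rfl
  rw [beta_eq_betaIntegralReal a b ha hb, hcomplex, Complex.ofReal_re,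
    intervalIntegral.integral_of_le zero_le_one, integral_Ioc_eq_integral_Ioo]

theorem image_div_one_sub_Ioo : (fun v : ℝ => v / (1 - v)) '' Ioo 0 1 = Ioi 0 := by
  ext u
  constructor
  · rintro ⟨v, ⟨hv0, hv1⟩, rfl⟩
    exact div_pos hv0 (sub_pos.mpr hv1)
  · intro (hu : 0 < u)
    refine ⟨u / (1 + u), ⟨by positivity, (div_lt_one (by positivity)).mpr (by linarith)⟩, ?_⟩
    field_simp
    ring

theorem integral_Ioi_rpow_mul_one_add_rpow_neg {a b : ℝ} (ha : 0 < a) (hb : 0 < b) :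
    ∫ u in Ioi (0 : ℝ), u ^ (a - 1) * (1 + u) ^ (-(a + b)) = beta a b := by
  have hderiv : ∀ v ∈ Ioo (0 : ℝ) 1,
      HasDerivWithinAt (fun v : ℝ => v / (1 - v)) ((1 - v) ^ 2)⁻¹ (Ioo 0 1) v := by
    intro v hv
    have h : (1 : ℝ) - v ≠ 0 := (sub_pos.mpr hv.2).ne'
    refine (((hasDerivAt_id v).div ((hasDerivAt_const v 1).sub (hasDerivAt_id v)) h).congr_deriv
      ?_).hasDerivWithinAt
    simp only [Pi.sub_apply, id]
    field_simp
    ring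
  have hinj : InjOn (fun v : ℝ => v / (1 - v)) (Ioo 0 1) := by
    intro v hv w hw h
    have := (div_eq_div_iff (sub_pos.mpr hv.2).ne' (sub_pos.mpr hw.2).ne').mp h
    linarith
  rw [← image_div_one_sub_Ioo,
    integral_image_eq_integral_abs_deriv_smul measurableSet_Ioo hderiv hinj,
    ← integral_Ioo_rpow_mul_one_sub_rpow ha hb]
  refine setIntegral_congr_fun measurableSet_Ioo fun v ⟨hv0, hv1⟩ => ?_
  have h1v : 0 < 1 - v := sub_pos.mpr hv1
  have hsum : 1 + v / (1 - v) = (1 - v)⁻¹ := by field_simp; ring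
  rw [smul_eq_mul, hsum, abs_of_pos (by positivity), div_rpow hv0.le h1v.le, inv_rpow h1v.le,
    ← rpow_neg h1v.le, neg_neg, div_eq_mul_inv, ← rpow_neg h1v.le, ← rpow_natCast,
    ← rpow_neg h1v.le]
  rw [mul_assoc (v ^ (a - 1)), ← rpow_add h1v, mul_left_comm, ← rpow_add h1v]
  congr 2
  push_cast
  ring

theorem integral_Ioi_rpow_mul_one_add_mul_neg {a b c : ℝ} (ha : 0 < a) (hb : 0 < b)
    (hc : 0 < c) :
    ∫ t in Ioi (0 : ℝ), t ^ (a - 1) * (1 + c * t) ^ (-(a + b)) = c ^ (-a) * beta a b := by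
  calc ∫ t in Ioi (0 : ℝ), t ^ (a - 1) * (1 + c * t) ^ (-(a + b))
      = ∫ t in Ioi (0 : ℝ), c ^ (1 - a) * ((c * t) ^ (a - 1) * (1 + c * t) ^ (-(a + b))) := by
        refine setIntegral_congr_fun measurableSet_Ioi fun t (ht : 0 < t) => ?_
        rw [mul_rpow hc.le ht.le, ← mul_assoc, ← mul_assoc, ← rpow_add hc]
        simp
    _ = c ^ (-a) * beta a b := by
        rw [integral_const_mul,
          integral_comp_mul_left_Ioi (fun u => u ^ (a - 1) * (1 + u) ^ (-(a + b))) 0 hc, mul_zero,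
          integral_Ioi_rpow_mul_one_add_rpow_neg ha hb, smul_eq_mul, ← mul_assoc, ← rpow_neg_one,
          ← rpow_add hc]
        ring_nf

theorem integral_Ioi_rpow_mul_one_add_mul_rpow_neg {s p b c : ℝ} (hs : 0 < s) (hp : 0 < p)
    (hb : 0 < b) (hc : 0 < c) :
    ∫ y in Ioi (0 : ℝ), y ^ (s - 1) * (1 + c * y ^ p) ^ (-(s / p + b))
      = p⁻¹ * c ^ (-(s / p)) * beta (s / p) b := by
  set g : ℝ → ℝ := fun t => t ^ (s / p - 1) * (1 + c * t) ^ (-(s / p + b))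
  calc ∫ y in Ioi (0 : ℝ), y ^ (s - 1) * (1 + c * y ^ p) ^ (-(s / p + b))
      = ∫ y in Ioi (0 : ℝ), p⁻¹ * ((p * y ^ (p - 1)) • g (y ^ p)) := by
        refine setIntegral_congr_fun measurableSet_Ioi fun y (hy : 0 < y) => ?_
        have hpow : y ^ (s - 1) = p⁻¹ * (p * y ^ (p - 1)) * (y ^ p) ^ (s / p - 1) := by
          rw [← rpow_mul hy.le, ← mul_assoc, inv_mul_cancel₀ hp.ne', one_mul, ← rpow_add hy]
          congr 1
          field_simp
          ring
        rw [hpow, smul_eq_mul]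
        ring
    _ = p⁻¹ * c ^ (-(s / p)) * beta (s / p) b := by
        rw [integral_const_mul, integral_comp_rpow_Ioi_of_pos hp,
          integral_Ioi_rpow_mul_one_add_mul_neg (div_pos hs hp) hb hc, mul_assoc]

theorem integral_one_add_mul_norm_rpow_neg {E : Type*} [NormedAddCommGroup E]
    [NormedSpace ℝ E] [FiniteDimensional ℝ E] [MeasurableSpace E] [BorelSpace E] [Nontrivial E]
    (μ : Measure E) [μ.IsAddHaarMeasure] {p b c : ℝ} (hp : 0 < p) (hb : 0 < b) (hc : 0 < c) :
    ∫ x, (1 + c * ‖x‖ ^ p) ^ (-(Module.finrank ℝ E / p + b)) ∂μ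
      = μ.real (Metric.ball 0 1) * (Module.finrank ℝ E / p) * c ^ (-(Module.finrank ℝ E / p))
        * beta (Module.finrank ℝ E / p) b := by
  set d := Module.finrank ℝ E
  have hd : 0 < (d : ℝ) := Nat.cast_pos.mpr Module.finrank_pos
  have hradial : ∫ y in Ioi (0 : ℝ), y ^ (d - 1) • (1 + c * y ^ p) ^ (-(d / p + b))
      = p⁻¹ * c ^ (-(d / p)) * beta (d / p) b := by
    rw [← integral_Ioi_rpow_mul_one_add_mul_rpow_neg hd hp hb hc]
    refine setIntegral_congr_fun measurableSet_Ioi fun y (hy : 0 < y) => ?_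
    rw [smul_eq_mul, ← rpow_natCast, Nat.cast_pred Module.finrank_pos]
  rw [integral_fun_norm_addHaar μ fun r => (1 + c * r ^ p) ^ (-(d / p + b)), hradial,
    nsmul_eq_mul, smul_eq_mul]
  ring

theorem InnerProductSpace.volume_real_ball_zero_one {F : Type*} [NormedAddCommGroup F]
    [InnerProductSpace ℝ F] [FiniteDimensional ℝ F] [MeasurableSpace F] [BorelSpace F]
    [Nontrivial F] :
    volume.real (Metric.ball (0 : F) 1)
      = π ^ (Module.finrank ℝ F / 2 : ℝ) / Gamma (Module.finrank ℝ F / 2 + 1) := by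
  rw [measureReal_def, InnerProductSpace.volume_ball, ENNReal.ofReal_one, one_pow, one_mul,
    ENNReal.toReal_ofReal (by positivity), sqrt_eq_rpow, ← rpow_mul_natCast pi_pos.le]
  ring_nf

/-- For `n ≥ 1`, `α > 0` and `q < 0`, the integral over `ℝⁿ` of
`(1 − (q/α)|x|^α)^(1/q − n/α − 1)` equals
`π^(n/2) B(n/α, 1 − 1/q) / ((α/n)(−q/α)^(n/α) Γ(n/2+1))`,
where `B(x,y) = Γ(x)Γ(y)/Γ(x+y)`. -/
theorem generalized_gaussian_partition_function_neg
    (n : ℕ) (hn : 1 ≤ n) (α q : ℝ) (hα : 0 < α) (hq : q < 0) :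
    (∫ x : EuclideanSpace ℝ (Fin n),
        (1 - q / α * ‖x‖ ^ α) ^ (1 / q - (n : ℝ) / α - 1))
      = Real.pi ^ ((n : ℝ) / 2) *
          (Real.Gamma ((n : ℝ) / α) * Real.Gamma (1 - 1 / q) /
            Real.Gamma ((n : ℝ) / α + (1 - 1 / q))) /
        (α / (n : ℝ) * (-(q / α)) ^ ((n : ℝ) / α) * Real.Gamma ((n : ℝ) / 2 + 1)) := by
  have : Nonempty (Fin n) := Fin.pos_iff_nonempty.mp hn
  have hc : 0 < -(q / α) := neg_pos.mpr (div_neg_of_neg_of_pos hq hα)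
  have hb : 0 < 1 - 1 / q := by linarith [one_div_neg.mpr hq]
  have hintegrand : ∀ x : EuclideanSpace ℝ (Fin n),
      (1 - q / α * ‖x‖ ^ α) ^ (1 / q - (n : ℝ) / α - 1)
        = (1 + -(q / α) * ‖x‖ ^ α) ^
            (-(Module.finrank ℝ (EuclideanSpace ℝ (Fin n)) / α + (1 - 1 / q))) := by
    intro x
    rw [finrank_euclideanSpace_fin]
    ring_nf
  simp_rw [hintegrand]
  rw [integral_one_add_mul_norm_rpow_neg volume hα hb hc,
    InnerProductSpace.volume_real_ball_zero_one, finrank_euclideanSpace_fin, beta, rpow_neg hc.le]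
  have hΓ : 0 < Gamma (n / 2 + 1) := Gamma_pos_of_pos (by positivity)
  field_simp
end

section
/- Let n ≥ 1, α ≥ 1 and 0 ≤ q < α/(n+α). Then the generalized Gaussian density g_{α,q} is log-concave on ℝⁿ: for all x, y ∈ ℝⁿ and all λ ∈ [0,1], g_{α,q}((1−λ)x + λy) ≥ g_{α,q}(x)^{1−λ}·g_{α,q}(y)^{λ}. -/
/-!
Up to the positive factor `Z⁻¹`, `g_{α,q}(x) = φ(‖x‖^α)` with `φ(t) = exp(-t/α)` for `q = 0` and
`φ(t) = max(1 - (q/α) t, 0)^p`, `p = 1/q - n/α - 1`, for `q > 0`; the condition `q < α/(n+α)` is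
what makes `p ≥ 0`. Then `φ` is nonincreasing and log-concave (a nonnegative power of the
positive part of an affine function), and `x ↦ ‖x‖^α` is convex for `α ≥ 1`, so
`φ(‖(1-λ)x + λy‖^α) ≥ φ((1-λ)‖x‖^α + λ‖y‖^α) ≥ φ(‖x‖^α)^(1-λ) φ(‖y‖^α)^λ`.
-/

open MeasureTheory Real Filter
open scoped Pointwise RealInnerProductSpace

/-- The (unnormalized) radial profile of the generalized Gaussian density in dimension `n`:
`r ↦ max(1 − (q/α) r^α, 0)^(1/q − n/α − 1)` for `q ≠ 0` and `r ↦ exp(−r^α/α)` for `q = 0`. -/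
noncomputable def gProfile (n : ℕ) (α q r : ℝ) : ℝ :=
  if q = 0 then Real.exp (-(r ^ α) / α)
  else (max (1 - q / α * r ^ α) 0) ^ (1 / q - (n : ℝ) / α - 1)

/-- The partition function `Z(α,q)`, i.e. the normalizing constant making the generalized
Gaussian density a probability density. -/
noncomputable def Zconst (n : ℕ) (α q : ℝ) : ℝ :=
  ∫ x : EuclideanSpace ℝ (Fin n), gProfile n α q ‖x‖

/-- The generalized Gaussian density `g_{α,q}` on `ℝⁿ`. -/
noncomputable def gGauss (n : ℕ) (α q : ℝ) (x : EuclideanSpace ℝ (Fin n)) : ℝ :=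
  (Zconst n α q)⁻¹ * gProfile n α q ‖x‖

/-- The generalized Gaussian volume `G_{α,q}(K) = ∫_K g_{α,q}(x) dx`. -/
noncomputable def Ggen (n : ℕ) (α q : ℝ) (K : Set (EuclideanSpace ℝ (Fin n))) : ℝ :=
  ∫ x in K, gGauss n α q x

variable {E : Type*}

def IsLogConcave [AddCommGroup E] [Module ℝ E] (f : E → ℝ) : Prop :=
  ∀ x y : E, ∀ l ∈ Set.Icc (0 : ℝ) 1, f x ^ (1 - l) * f y ^ l ≤ f ((1 - l) • x + l • y)

namespace IsLogConcave

variable [AddCommGroup E] [Module ℝ E] {f : E → ℝ}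

theorem const_mul (hf : IsLogConcave f) (hf0 : ∀ x, 0 ≤ f x) {c : ℝ} (hc : 0 ≤ c) :
    IsLogConcave fun x => c * f x := by
  intro x y l hl
  calc (c * f x) ^ (1 - l) * (c * f y) ^ l
      = c ^ (1 - l) * c ^ l * (f x ^ (1 - l) * f y ^ l) := by
        rw [mul_rpow hc (hf0 x), mul_rpow hc (hf0 y)]; ring
    _ = c * (f x ^ (1 - l) * f y ^ l) := by
        rw [← rpow_add' hc (by norm_num), sub_add_cancel, rpow_one]
    _ ≤ c * f ((1 - l) • x + l • y) := mul_le_mul_of_nonneg_left (hf x y l hl) hc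

theorem rpow (hf : IsLogConcave f) (hf0 : ∀ x, 0 ≤ f x) {p : ℝ} (hp : 0 ≤ p) :
    IsLogConcave fun x => f x ^ p := by
  intro x y l hl
  calc (f x ^ p) ^ (1 - l) * (f y ^ p) ^ l = (f x ^ (1 - l) * f y ^ l) ^ p := by
        rw [mul_rpow (rpow_nonneg (hf0 x) _) (rpow_nonneg (hf0 y) _), ← rpow_mul (hf0 x),
          ← rpow_mul (hf0 y), ← rpow_mul (hf0 x), ← rpow_mul (hf0 y), mul_comm p, mul_comm p]
    _ ≤ f ((1 - l) • x + l • y) ^ p :=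
        rpow_le_rpow (mul_nonneg (rpow_nonneg (hf0 x) _) (rpow_nonneg (hf0 y) _))
          (hf x y l hl) hp

theorem comp_convexOn {φ : ℝ → ℝ} (hφ : IsLogConcave φ) (hφ_anti : Antitone φ) {ψ : E → ℝ}
    (hψ : ConvexOn ℝ Set.univ ψ) : IsLogConcave (φ ∘ ψ) := by
  intro x y l ⟨hl0, hl1⟩
  calc φ (ψ x) ^ (1 - l) * φ (ψ y) ^ l ≤ φ ((1 - l) • ψ x + l • ψ y) := hφ _ _ l ⟨hl0, hl1⟩
    _ ≤ φ (ψ ((1 - l) • x + l • y)) :=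
        hφ_anti (hψ.2 trivial trivial (sub_nonneg.2 hl1) hl0 (sub_add_cancel 1 l))

end IsLogConcave

theorem ConcaveOn.isLogConcave_exp [AddCommGroup E] [Module ℝ E] {h : E → ℝ}
    (hh : ConcaveOn ℝ Set.univ h) : IsLogConcave fun x => exp (h x) := by
  intro x y l ⟨hl0, hl1⟩
  rw [← exp_mul, ← exp_mul, ← exp_add, exp_le_exp, mul_comm, mul_comm (h y)]
  exact hh.2 trivial trivial (sub_nonneg.2 hl1) hl0 (sub_add_cancel 1 l)

/-- Where the positive part vanishes the left-hand side does too; elsewhere this is the weighted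
AM-GM inequality followed by concavity. -/
theorem ConcaveOn.isLogConcave_max_zero [AddCommGroup E] [Module ℝ E] {h : E → ℝ}
    (hh : ConcaveOn ℝ Set.univ h) : IsLogConcave fun x => max (h x) 0 := by
  intro x y l ⟨hl0, hl1⟩
  dsimp only
  rcases hl0.eq_or_lt with rfl | hl0
  · simp
  rcases hl1.eq_or_lt with rfl | hl1
  · simp
  rcases le_or_gt (h x) 0 with hx | hx
  · rw [max_eq_right hx, zero_rpow (sub_pos.2 hl1).ne', zero_mul]
    exact le_max_right _ _
  rcases le_or_gt (h y) 0 with hy | hy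
  · rw [max_eq_right hy, zero_rpow hl0.ne', mul_zero]
    exact le_max_right _ _
  rw [max_eq_left hx.le, max_eq_left hy.le]
  calc h x ^ (1 - l) * h y ^ l ≤ (1 - l) * h x + l * h y :=
        geom_mean_le_arith_mean2_weighted (sub_nonneg.2 hl1.le) hl0.le hx.le hy.le (by ring)
    _ ≤ h ((1 - l) • x + l • y) :=
        hh.2 trivial trivial (sub_nonneg.2 hl1.le) hl0.le (sub_add_cancel 1 l)
    _ ≤ _ := le_max_left _ _

theorem convexOn_univ_norm_rpow {F : Type*} [NormedAddCommGroup F] [NormedSpace ℝ F] {α : ℝ}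
    (hα : 1 ≤ α) : ConvexOn ℝ Set.univ fun x : F => ‖x‖ ^ α := by
  refine ⟨convex_univ, fun x _ y _ a b ha hb hab => ?_⟩
  calc ‖a • x + b • y‖ ^ α ≤ (a * ‖x‖ + b * ‖y‖) ^ α :=
        rpow_le_rpow (norm_nonneg _) ((convexOn_univ_norm.2 trivial trivial ha hb hab))
          (by linarith)
    _ ≤ a • ‖x‖ ^ α + b • ‖y‖ ^ α :=
        (convexOn_rpow hα).2 (norm_nonneg x) (norm_nonneg y) ha hb hab

theorem one_div_sub_div_sub_one_nonneg {n α q : ℝ} (hn : 0 ≤ n) (hα : 0 < α) (hq0 : 0 < q)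
    (hq : q ≤ α / (n + α)) : 0 ≤ 1 / q - n / α - 1 := by
  have hnα : 0 < n + α := by linarith
  have key : (n + α) / α ≤ 1 / q := by
    rw [div_le_div_iff₀ hα hq0]
    nlinarith [(le_div_iff₀ hnα).1 hq]
  rw [add_div, div_self hα.ne'] at key
  linarith

theorem gProfile_nonneg (n : ℕ) (α q r : ℝ) : 0 ≤ gProfile n α q r := by
  unfold gProfile
  split_ifs
  · exact (exp_pos _).le
  · exact rpow_nonneg (le_max_right _ _) _

/-- `gProfile n α q r = gProfileOfPow n α q (r ^ α)` by definition. -/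
noncomputable def gProfileOfPow (n : ℕ) (α q t : ℝ) : ℝ :=
  if q = 0 then exp (-t / α) else max (1 - q / α * t) 0 ^ (1 / q - (n : ℝ) / α - 1)

theorem antitone_gProfileOfPow {n : ℕ} {α q : ℝ} (hα : 0 < α) (hq0 : 0 ≤ q)
    (hq : q ≤ α / (n + α)) : Antitone (gProfileOfPow n α q) := by
  intro s t hst
  unfold gProfileOfPow
  split_ifs with hq_zero
  · gcongr
  · have := one_div_sub_div_sub_one_nonneg n.cast_nonneg hα (hq0.lt_of_ne' hq_zero) hq
    gcongr

theorem isLogConcave_gProfileOfPow {n : ℕ} {α q : ℝ} (hα : 0 < α) (hq0 : 0 ≤ q)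
    (hq : q ≤ α / (n + α)) : IsLogConcave (gProfileOfPow n α q) := by
  unfold gProfileOfPow
  rcases hq0.eq_or_lt with rfl | hq_pos
  · simp only [if_true]
    exact ConcaveOn.isLogConcave_exp
      ⟨convex_univ, fun s _ t _ a b _ _ _ => le_of_eq (by simp only [smul_eq_mul]; ring)⟩
  · simp only [hq_pos.ne', if_false]
    have hconc : ConcaveOn ℝ Set.univ fun t : ℝ => 1 - q / α * t :=
      ⟨convex_univ, fun s _ t _ a b _ _ hab =>
        le_of_eq (by simp only [smul_eq_mul]; linear_combination hab)⟩
    exact hconc.isLogConcave_max_zero.rpow (fun _ => le_max_right _ _)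
      (one_div_sub_div_sub_one_nonneg n.cast_nonneg hα hq_pos hq)

theorem isLogConcave_gGauss {n : ℕ} {α q : ℝ} (hα : 1 ≤ α) (hq0 : 0 ≤ q)
    (hq : q ≤ α / (n + α)) : IsLogConcave (gGauss n α q) := by
  have hα0 : 0 < α := by linarith
  have hprofile : IsLogConcave fun x : EuclideanSpace ℝ (Fin n) => gProfile n α q ‖x‖ :=
    (isLogConcave_gProfileOfPow hα0 hq0 hq).comp_convexOn (antitone_gProfileOfPow hα0 hq0 hq)
      (convexOn_univ_norm_rpow hα)
  exact hprofile.const_mul (fun x => gProfile_nonneg n α q ‖x‖)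
    (inv_nonneg.2 (integral_nonneg fun x => gProfile_nonneg n α q ‖x‖))

theorem generalized_gaussian_log_concave_general
    (n : ℕ) (α q : ℝ) (hα : 1 ≤ α) (hq0 : 0 ≤ q)
    (hq : q < α / ((n : ℝ) + α)) :
    ∀ x y : EuclideanSpace ℝ (Fin n), ∀ l ∈ Set.Icc (0 : ℝ) 1,
      gGauss n α q x ^ (1 - l) * gGauss n α q y ^ l
        ≤ gGauss n α q ((1 - l) • x + l • y) :=
  isLogConcave_gGauss hα hq0 hq.le

/-- For `α ≥ 1` and `0 ≤ q < α/(n+α)`, the generalized Gaussian density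
`g_{α,q}` is log-concave on `ℝⁿ`. -/
theorem generalized_gaussian_log_concave
    (n : ℕ) (hn : 1 ≤ n) (α q : ℝ) (hα : 1 ≤ α) (hq0 : 0 ≤ q)
    (hq : q < α / ((n : ℝ) + α)) :
    ∀ x y : EuclideanSpace ℝ (Fin n), ∀ l ∈ Set.Icc (0 : ℝ) 1,
      gGauss n α q x ^ (1 - l) * gGauss n α q y ^ l
        ≤ gGauss n α q ((1 - l) • x + l • y) :=
  generalized_gaussian_log_concave_general n α q hα hq0 hq
end

section
/- Let n ≥ 1, α ≥ 1 and α/(n+α) ≤ q < α/n. Then the radial profile of the generalized Gaussian density is log-convex on the interior of its support punctured at the origin: for every unit vector e ∈ ℝⁿ, the function r ↦ log g_{α,q}(r·e) = −log Z(α,q) + (1/q − n/α − 1)·log(1 − (q/α)r^α) is convex on (0, (α/q)^{1/α}). -/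
open MeasureTheory Real Filter
open scoped Pointwise RealInnerProductSpace

private lemma convexOn_congr_aux {s : Set ℝ} {f g : ℝ → ℝ} (hf : ConvexOn ℝ s f)
    (h : Set.EqOn f g s) : ConvexOn ℝ s g := by
  refine ⟨hf.1, fun x hx y hy u v hu hv huv => ?_⟩
  rw [← h hx, ← h hy, ← h (hf.1 hx hy hu hv huv)]
  exact hf.2 hx hy hu hv huv

/-- For `α ≥ 1` and `α/(n+α) ≤ q < α/n`, the radial profile of the generalized
Gaussian density is log-convex on the punctured interior of its support: for any unit vector
`e`, the function `r ↦ log g_{α,q}(r e)` is convex on `(0, (α/q)^{1/α})`. -/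
theorem generalized_gaussian_log_convex_large_q
    (n : ℕ) (hn : 1 ≤ n) (α q : ℝ) (hα : 1 ≤ α)
    (hq1 : α / ((n : ℝ) + α) ≤ q) (hq2 : q < α / (n : ℝ))
    (e : EuclideanSpace ℝ (Fin n)) (he : ‖e‖ = 1) :
    ConvexOn ℝ (Set.Ioo (0 : ℝ) ((α / q) ^ (1 / α)))
      (fun r : ℝ => Real.log (gGauss n α q (r • e))) := by
  have hα0 : (0:ℝ) < α := lt_of_lt_of_le one_pos hα
  have hn0 : (0:ℝ) < (n:ℝ) := by exact_mod_cast hn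
  have hq0 : 0 < q := lt_of_lt_of_le (div_pos hα0 (by linarith)) hq1
  set a : ℝ := q / α with ha_def
  have ha : 0 < a := div_pos hq0 hα0
  set c : ℝ := 1 / q - (n:ℝ) / α - 1 with hc_def
  have hc : c ≤ 0 := by
    have h1 : 1 / q ≤ 1 / (α / ((n:ℝ) + α)) :=
      one_div_le_one_div_of_le (div_pos hα0 (by linarith)) hq1
    have h2 : 1 / (α / ((n:ℝ) + α)) = (n:ℝ) / α + 1 := by field_simp
    rw [hc_def]; rw [h2] at h1; linarith
  set R : ℝ := (α / q) ^ (1 / α) with hR_def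
  have haq : (0:ℝ) < α / q := div_pos hα0 hq0
  have hRα : R ^ α = α / q := by
    rw [hR_def, ← Real.rpow_mul haq.le, one_div, inv_mul_cancel₀ hα0.ne', Real.rpow_one]
  -- key positivity on the interval
  have hpos : ∀ r ∈ Set.Ioo (0:ℝ) R, 0 < 1 - a * r ^ α := by
    intro r hr
    have h1 : r ^ α < α / q := by
      rw [← hRα]; exact Real.rpow_lt_rpow hr.1.le hr.2 hα0
    have h2 : a * r ^ α < a * (α / q) := by
      exact mul_lt_mul_of_pos_left h1 ha
    have h3 : a * (α / q) = 1 := by rw [ha_def]; field_simp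
    linarith
  -- convexity of g : s ↦ c * log (1 - a * s) on A = Ioo 0 (α/q)
  set A : Set ℝ := Set.Ioo (0:ℝ) (α / q) with hA_def
  have hApos : ∀ s ∈ A, 0 < 1 - a * s := by
    intro s hs
    have h2 : a * s < a * (α / q) := mul_lt_mul_of_pos_left hs.2 ha
    have h3 : a * (α / q) = 1 := by rw [ha_def]; field_simp
    linarith
  have hg : ConvexOn ℝ A (fun s => c * Real.log (1 - a * s)) := by
    refine ⟨convex_Ioo _ _, fun x hx y hy u v hu hv huv => ?_⟩
    have hpx := hApos x hx
    have hpy := hApos y hy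
    have hkey := (strictConcaveOn_log_Ioi.concaveOn).2 (Set.mem_Ioi.2 hpx)
      (Set.mem_Ioi.2 hpy) hu hv huv
    simp only [smul_eq_mul] at hkey ⊢
    have harg : u * (1 - a * x) + v * (1 - a * y) = 1 - a * (u * x + v * y) := by
      have hv' : v = 1 - u := by linarith
      rw [hv']; ring
    rw [harg] at hkey
    calc c * Real.log (1 - a * (u * x + v * y))
        ≤ c * (u * Real.log (1 - a * x) + v * Real.log (1 - a * y)) :=
          mul_le_mul_of_nonpos_left hkey hc
      _ = u * (c * Real.log (1 - a * x)) + v * (c * Real.log (1 - a * y)) := by ring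
  have hgmono : MonotoneOn (fun s => c * Real.log (1 - a * s)) A := by
    intro x hx y hy hxy
    have hpy := hApos y hy
    have hlog : Real.log (1 - a * y) ≤ Real.log (1 - a * x) := by
      apply Real.log_le_log hpy
      nlinarith
    exact mul_le_mul_of_nonpos_left hlog hc
  -- the image of Ioo 0 R under r ↦ r ^ α is A
  have himg : (fun r : ℝ => r ^ α) '' Set.Ioo (0:ℝ) R = A := by
    ext s
    constructor
    · rintro ⟨r, hr, rfl⟩
      exact ⟨Real.rpow_pos_of_pos hr.1 α, by rw [← hRα]; exact Real.rpow_lt_rpow hr.1.le hr.2 hα0⟩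
    · rintro hs
      refine ⟨s ^ (1/α), ⟨Real.rpow_pos_of_pos hs.1 _, Real.rpow_lt_rpow hs.1.le hs.2 (by positivity)⟩, ?_⟩
      show (s ^ (1/α)) ^ α = s
      rw [← Real.rpow_mul hs.1.le, one_div, inv_mul_cancel₀ hα0.ne', Real.rpow_one]
  -- convexity of r ↦ r ^ α on Ioo 0 R
  have hf : ConvexOn ℝ (Set.Ioo (0:ℝ) R) (fun r : ℝ => r ^ α) := by
    exact (convexOn_rpow hα).subset (fun x hx => le_of_lt hx.1) (convex_Ioo _ _)
  have hcomp : ConvexOn ℝ (Set.Ioo (0:ℝ) R)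
      (fun r : ℝ => c * Real.log (1 - a * r ^ α)) := by
    have := ConvexOn.comp (f := fun r : ℝ => r ^ α)
      (g := fun s => c * Real.log (1 - a * s)) (himg ▸ hg) hf (himg ▸ hgmono)
    exact this
  -- now finish with congruence
  rcases eq_or_ne (Zconst n α q) 0 with hZ | hZ
  · refine convexOn_congr_aux (convexOn_const 0 (convex_Ioo _ _)) ?_
    intro r hr
    simp [gGauss, hZ]
  · refine convexOn_congr_aux ((convexOn_const (Real.log (Zconst n α q)⁻¹)
      (convex_Ioo _ _)).add hcomp) ?_
    intro r hr
    have hre : ‖r • e‖ = r := by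
      rw [norm_smul, he, mul_one, Real.norm_eq_abs, abs_of_pos hr.1]
    have hp := hpos r hr
    have hmax : max (1 - q / α * r ^ α) 0 = 1 - a * r ^ α := by
      rw [max_eq_left]; exact hp.le
    simp only [gGauss, hre, gProfile, if_neg hq0.ne']
    rw [hmax, Real.log_mul (inv_ne_zero hZ) (Real.rpow_pos_of_pos hp _).ne',
      Real.log_rpow hp]
    simp only [Pi.add_apply, ← hc_def]
end

section
/- (Lipschitz dependence of the radial function of Wulff shapes under L_p perturbation.) Let n ≥ 2, p ≠ 0, K ∈ K^n_o, and let f be a positive continuous function on S^{n−1}. Then there exist δ > 0 and M > 0 such that for every t ∈ (−δ, δ): the function h_t(v) = (h_K(v)^p + t·f(v)^p)^{1/p} is a well-defined positive continuous function on S^{n−1}, and |ρ_{[h_t]}(u) − ρ_K(u)| ≤ M·|t| for every u ∈ S^{n−1}. -/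
open MeasureTheory Real Filter
open scoped Pointwise RealInnerProductSpace

/-- The unit sphere `S^{n−1}` in `ℝⁿ`. -/
abbrev unitSphere (n : ℕ) := Metric.sphere (0 : EuclideanSpace ℝ (Fin n)) 1

/-- The support function of a set `K ⊆ ℝⁿ`: `h_K(v) = sup_{x ∈ K} ⟨x, v⟩`. -/
noncomputable def suppFn (n : ℕ) (K : Set (EuclideanSpace ℝ (Fin n)))
    (v : EuclideanSpace ℝ (Fin n)) : ℝ :=
  sSup ((fun x : EuclideanSpace ℝ (Fin n) => ⟪x, v⟫) '' K)

/-- The Wulff shape `[f]` of a function `f` on the unit sphere: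
`[f] = {x : ⟨x,v⟩ ≤ f(v) for all v ∈ S^{n−1}}`. -/
def wulff (n : ℕ) (f : unitSphere n → ℝ) : Set (EuclideanSpace ℝ (Fin n)) :=
  {x | ∀ v : unitSphere n, ⟪x, (v : EuclideanSpace ℝ (Fin n))⟫ ≤ f v}

/-- The radial function of `K`: `ρ_K(u) = sup{λ > 0 : λu ∈ K}`. -/
noncomputable def radialFn (n : ℕ) (K : Set (EuclideanSpace ℝ (Fin n)))
    (u : EuclideanSpace ℝ (Fin n)) : ℝ :=
  sSup {r : ℝ | 0 < r ∧ r • u ∈ K}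

lemma aux_rpow_lip (β : ℝ) : ∃ C : ℝ, 0 < C ∧
    ∀ x ∈ Set.Icc (1/2 : ℝ) (3/2), |x ^ β - 1| ≤ C * |x - 1| := by
  refine ⟨|β| * 2 ^ |β - 1| + 1, by positivity, fun x hx => ?_⟩
  have h1 : (1:ℝ) ∈ Set.Icc (1/2:ℝ) (3/2) := by norm_num
  have key : ∀ y ∈ Set.Icc (1/2:ℝ) (3/2), ‖β * y ^ (β-1)‖ ≤ |β| * 2 ^ |β - 1| := by
    intro y hy
    have hy0 : (0:ℝ) < y := lt_of_lt_of_le (by norm_num) hy.1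
    have hb : y ^ (β - 1) ≤ 2 ^ |β - 1| := by
      rw [Real.rpow_def_of_pos hy0, Real.rpow_def_of_pos (by norm_num : (0:ℝ) < 2)]
      apply Real.exp_le_exp.2
      have hlog : |Real.log y| ≤ Real.log 2 := by
        rw [abs_le]
        constructor
        · rw [neg_le, ← Real.log_inv]
          exact Real.log_le_log (by positivity) (by rw [inv_le_comm₀ hy0 (by norm_num)]; linarith [hy.1])
        · exact Real.log_le_log hy0 (by linarith [hy.2])
      calc Real.log y * (β - 1) ≤ |Real.log y * (β - 1)| := le_abs_self _
        _ = |Real.log y| * |β - 1| := abs_mul _ _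
        _ ≤ Real.log 2 * |β - 1| := mul_le_mul_of_nonneg_right hlog (abs_nonneg _)
    calc ‖β * y ^ (β-1)‖ = |β| * |y ^ (β-1)| := by rw [Real.norm_eq_abs, abs_mul]
      _ = |β| * y ^ (β-1) := by rw [abs_of_nonneg (Real.rpow_nonneg hy0.le _)]
      _ ≤ |β| * 2 ^ |β - 1| := mul_le_mul_of_nonneg_left hb (abs_nonneg _)
  have hderiv : ∀ y ∈ Set.Icc (1/2:ℝ) (3/2), HasDerivWithinAt (fun z : ℝ => z ^ β)
      (β * y ^ (β - 1)) (Set.Icc (1/2:ℝ) (3/2)) y := fun y hy =>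
    (Real.hasDerivAt_rpow_const (Or.inl (by linarith [hy.1] : y ≠ 0))).hasDerivWithinAt
  have := Convex.norm_image_sub_le_of_norm_hasDerivWithin_le hderiv key (convex_Icc _ _) h1 hx
  rw [Real.one_rpow, Real.norm_eq_abs, Real.norm_eq_abs] at this
  nlinarith [abs_nonneg (x - 1), this]

set_option maxHeartbeats 1600000 in
/-- Lipschitz dependence of the radial function of Wulff shapes under `L_p`
perturbation. For `p ≠ 0`, `K ∈ K^n_o` and a positive continuous `f` on `S^{n−1}`, there
are `δ > 0` and `M > 0` such that for `|t| < δ` the function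
`h_t = (h_K^p + t f^p)^{1/p}` is a well-defined positive continuous function on the sphere
and `|ρ_{[h_t]}(u) − ρ_K(u)| ≤ M|t|` for every unit vector `u`. -/
theorem radial_function_lipschitz_wulff
    (n : ℕ) (hn : 2 ≤ n) (p : ℝ) (hp : p ≠ 0)
    (K : Set (EuclideanSpace ℝ (Fin n)))
    (hKcomp : IsCompact K) (hKconv : Convex ℝ K) (hKint : 0 ∈ interior K)
    (f : unitSphere n → ℝ) (hfc : Continuous f) (hfpos : ∀ v, 0 < f v) :
    ∃ δ : ℝ, 0 < δ ∧ ∃ M : ℝ, 0 < M ∧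
      ∀ t ∈ Set.Ioo (-δ) δ,
        (∀ v : unitSphere n,
          0 < suppFn n K (v : EuclideanSpace ℝ (Fin n)) ^ p + t * f v ^ p) ∧
        (∀ v : unitSphere n,
          0 < (suppFn n K (v : EuclideanSpace ℝ (Fin n)) ^ p + t * f v ^ p) ^ (1 / p)) ∧
        Continuous (fun v : unitSphere n =>
          (suppFn n K (v : EuclideanSpace ℝ (Fin n)) ^ p + t * f v ^ p) ^ (1 / p)) ∧
        ∀ u : unitSphere n,
          |radialFn n (wulff n (fun v : unitSphere n =>
              (suppFn n K (v : EuclideanSpace ℝ (Fin n)) ^ p + t * f v ^ p) ^ (1 / p)))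
              (u : EuclideanSpace ℝ (Fin n))
            - radialFn n K (u : EuclideanSpace ℝ (Fin n))| ≤ M * |t| := by
  classical
  obtain ⟨r0, hr0, hball⟩ := Metric.nhds_basis_closedBall.mem_iff.mp
    (mem_interior_iff_mem_nhds.mp hKint)
  obtain ⟨R, hr0R, hKR⟩ := hKcomp.isBounded.subset_closedBall_lt r0 0
  have hR : 0 < R := lt_trans hr0 hr0R
  have hK0 : (0 : EuclideanSpace ℝ (Fin n)) ∈ K := hball (Metric.mem_closedBall_self hr0.le)
  have hKne : K.Nonempty := ⟨0, hK0⟩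
  have hnormK : ∀ x ∈ K, ‖x‖ ≤ R := fun x hx => mem_closedBall_zero_iff.mp (hKR hx)
  have hbdd : ∀ w : EuclideanSpace ℝ (Fin n), BddAbove ((fun x => ⟪x, w⟫) '' K) := by
    intro w
    refine ⟨R * ‖w‖, ?_⟩
    rintro y ⟨x, hx, rfl⟩
    calc ⟪x, w⟫ ≤ ‖x‖ * ‖w‖ := real_inner_le_norm x w
      _ ≤ R * ‖w‖ := mul_le_mul_of_nonneg_right (hnormK x hx) (norm_nonneg w)
  have hne : ∀ w : EuclideanSpace ℝ (Fin n), ((fun x => ⟪x, w⟫) '' K).Nonempty :=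
    fun w => hKne.image _
  have hsupp_mem : ∀ w : EuclideanSpace ℝ (Fin n), ∀ x ∈ K, ⟪x, w⟫ ≤ suppFn n K w :=
    fun w x hx => le_csSup (hbdd w) (Set.mem_image_of_mem _ hx)
  have hsupp_ub : ∀ w : EuclideanSpace ℝ (Fin n), ‖w‖ = 1 → suppFn n K w ≤ R := by
    intro w hw
    apply csSup_le (hne w)
    rintro y ⟨x, hx, rfl⟩
    calc ⟪x, w⟫ ≤ ‖x‖ * ‖w‖ := real_inner_le_norm x w
      _ ≤ R := by rw [hw, mul_one]; exact hnormK x hx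
  have hsupp_lb : ∀ w : EuclideanSpace ℝ (Fin n), ‖w‖ = 1 → r0 ≤ suppFn n K w := by
    intro w hw
    have hmem : r0 • w ∈ K := hball (by
      rw [mem_closedBall_zero_iff, norm_smul, hw, mul_one, Real.norm_eq_abs, abs_of_pos hr0])
    have h2 := hsupp_mem w _ hmem
    rwa [real_inner_smul_left, real_inner_self_eq_norm_mul_norm, hw, mul_one, mul_one] at h2
  have hlip : ∀ v w : EuclideanSpace ℝ (Fin n),
      suppFn n K v ≤ suppFn n K w + R * ‖v - w‖ := by
    intro v w
    apply csSup_le (hne v)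
    rintro y ⟨x, hx, rfl⟩
    have h1 : ⟪x, v⟫ = ⟪x, w⟫ + ⟪x, v - w⟫ := by rw [inner_sub_right]; ring
    have h2 : ⟪x, v - w⟫ ≤ R * ‖v - w‖ := le_trans (real_inner_le_norm _ _)
      (mul_le_mul_of_nonneg_right (hnormK x hx) (norm_nonneg _))
    have h3 := hsupp_mem w x hx
    linarith
  have hsupp_cont : Continuous (suppFn n K) := by
    apply LipschitzWith.continuous (K := Real.toNNReal R)
    apply LipschitzWith.of_dist_le_mul
    intro v w
    rw [Real.dist_eq, Real.coe_toNNReal R hR.le, dist_eq_norm]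
    have h1 := hlip v w
    have h2 := hlip w v
    rw [norm_sub_rev] at h2
    rw [abs_le]
    constructor <;> linarith
  have hmemK : ∀ x : EuclideanSpace ℝ (Fin n),
      (∀ v : unitSphere n, ⟪x, (v : EuclideanSpace ℝ (Fin n))⟫ ≤
        suppFn n K (v : EuclideanSpace ℝ (Fin n))) → x ∈ K := by
    intro x hx
    by_contra hxK
    obtain ⟨φ, uu, hu1, hu2⟩ := geometric_hahn_banach_closed_point hKconv hKcomp.isClosed hxK
    set y := (InnerProductSpace.toDual ℝ (EuclideanSpace ℝ (Fin n))).symm φ with hy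
    have hyapp : ∀ z, ⟪y, z⟫ = φ z := fun z => InnerProductSpace.toDual_symm_apply
    have hyne : y ≠ 0 := by
      intro h0
      have h1 : φ x = 0 := by rw [← hyapp x, h0, inner_zero_left]
      have h2 : (0:ℝ) < uu := by have := hu1 0 hK0; rwa [map_zero] at this
      rw [h1] at hu2; linarith
    have hynorm : (0:ℝ) < ‖y‖⁻¹ := by
      rw [inv_pos, norm_pos_iff]; exact hyne
    set v : EuclideanSpace ℝ (Fin n) := ‖y‖⁻¹ • y with hv
    have hvnorm : ‖v‖ = 1 := norm_smul_inv_norm hyne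
    have hinner : ∀ z, ⟪v, z⟫ = ‖y‖⁻¹ * φ z := fun z => by
      rw [hv, real_inner_smul_left, hyapp]
    have hub : suppFn n K v ≤ ‖y‖⁻¹ * uu := by
      apply csSup_le (hne v)
      rintro s ⟨a, ha, rfl⟩
      show (⟪a, v⟫ : ℝ) ≤ ‖y‖⁻¹ * uu
      rw [real_inner_comm, hinner]
      exact mul_le_mul_of_nonneg_left (hu1 a ha).le hynorm.le
    have hlb : ‖y‖⁻¹ * uu < ⟪x, v⟫ := by
      rw [real_inner_comm, hinner]
      exact mul_lt_mul_of_pos_left hu2 hynorm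
    have h10 : (⟪x, v⟫ : ℝ) ≤ suppFn n K v := hx ⟨v, mem_sphere_zero_iff_norm.mpr hvnorm⟩
    linarith
  have hradS : ∀ u : EuclideanSpace ℝ (Fin n), ‖u‖ = 1 →
      ∀ r ∈ {r : ℝ | 0 < r ∧ r • u ∈ K}, r ≤ R := by
    rintro u hu r ⟨hr, hmem⟩
    have h1 : ‖r • u‖ ≤ R := hnormK _ hmem
    rwa [norm_smul, hu, mul_one, Real.norm_eq_abs, abs_of_pos hr] at h1
  have hradmem : ∀ u : EuclideanSpace ℝ (Fin n), ‖u‖ = 1 →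
      r0 ∈ {r : ℝ | 0 < r ∧ r • u ∈ K} := by
    intro u hu
    exact ⟨hr0, hball (by
      rw [mem_closedBall_zero_iff, norm_smul, hu, mul_one, Real.norm_eq_abs, abs_of_pos hr0])⟩
  have hradK_lb : ∀ u : EuclideanSpace ℝ (Fin n), ‖u‖ = 1 → r0 ≤ radialFn n K u := fun u hu =>
    le_csSup ⟨R, hradS u hu⟩ (hradmem u hu)
  have hradK_ub : ∀ u : EuclideanSpace ℝ (Fin n), ‖u‖ = 1 → radialFn n K u ≤ R := fun u hu =>
    csSup_le ⟨r0, hradmem u hu⟩ (hradS u hu)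
  haveI : Nonempty (unitSphere n) := by
    refine ⟨⟨EuclideanSpace.single (⟨0, by omega⟩ : Fin n) (1:ℝ), ?_⟩⟩
    rw [mem_sphere_zero_iff_norm, EuclideanSpace.norm_single]; norm_num
  obtain ⟨vmin, -, hvmin⟩ := isCompact_univ.exists_isMinOn Set.univ_nonempty hfc.continuousOn
  obtain ⟨vmax, -, hvmax⟩ := isCompact_univ.exists_isMaxOn Set.univ_nonempty hfc.continuousOn
  have hfmin : ∀ v, f vmin ≤ f v := fun v => isMinOn_iff.mp hvmin v (Set.mem_univ v)
  have hfmax : ∀ v, f v ≤ f vmax := fun v => isMaxOn_iff.mp hvmax v (Set.mem_univ v)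
  set fB : ℝ := max (f vmin ^ p) (f vmax ^ p) with hfBdef
  set hb : ℝ := min (r0 ^ p) (R ^ p) with hhbdef
  have hfBpos : 0 < fB := lt_max_of_lt_left (Real.rpow_pos_of_pos (hfpos vmin) p)
  have hhbpos : 0 < hb := lt_min (Real.rpow_pos_of_pos hr0 p) (Real.rpow_pos_of_pos hR p)
  have hfB : ∀ v, f v ^ p ≤ fB := by
    intro v
    rcases hp.lt_or_gt with hneg | hpos
    · exact le_trans (Real.rpow_le_rpow_of_nonpos (hfpos vmin) (hfmin v) hneg.le) (le_max_left _ _)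
    · exact le_trans (Real.rpow_le_rpow (hfpos v).le (hfmax v) hpos.le) (le_max_right _ _)
  have hhble : ∀ w : EuclideanSpace ℝ (Fin n), ‖w‖ = 1 → hb ≤ suppFn n K w ^ p := by
    intro w hw
    rcases hp.lt_or_gt with hneg | hpos
    · exact le_trans (min_le_right _ _)
        (Real.rpow_le_rpow_of_nonpos (lt_of_lt_of_le hr0 (hsupp_lb w hw)) (hsupp_ub w hw) hneg.le)
    · exact le_trans (min_le_left _ _) (Real.rpow_le_rpow hr0.le (hsupp_lb w hw) hpos.le)
  obtain ⟨C, hC, hClip⟩ := aux_rpow_lip (1/p)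
  set B : ℝ := fB / hb with hBdef
  have hB : 0 < B := div_pos hfBpos hhbpos
  set C₀ : ℝ := R * C * B with hC₀def
  have hC₀ : 0 < C₀ := by positivity
  set c : ℝ := C₀ / r0 with hcdef
  have hc : 0 < c := div_pos hC₀ hr0
  have hc0r0 : C₀ = c * r0 := by rw [hcdef, div_mul_cancel₀ _ hr0.ne']
  refine ⟨min (1/(2*B)) (1/(2*c)), lt_min (by positivity) (by positivity), c * R,
    by positivity, ?_⟩
  intro t ht
  have habs : |t| < min (1/(2*B)) (1/(2*c)) := abs_lt.2 ⟨ht.1, ht.2⟩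
  have htB : |t| * B ≤ 1/2 := by
    have h1 := lt_of_lt_of_le habs (min_le_left _ _)
    calc |t| * B ≤ (1/(2*B)) * B := mul_le_mul_of_nonneg_right h1.le hB.le
      _ = 1/2 := by rw [div_mul_eq_mul_div, one_mul, mul_comm 2 B, ← div_div, div_self hB.ne']
  have htc : c * |t| ≤ 1/2 := by
    have h1 := lt_of_lt_of_le habs (min_le_right _ _)
    calc c * |t| ≤ c * (1/(2*c)) := mul_le_mul_of_nonneg_left h1.le hc.le
      _ = 1/2 := by rw [mul_one_div, mul_comm 2 c, ← div_div, div_self hc.ne']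
  have main : ∀ v : unitSphere n,
      0 < suppFn n K (v : EuclideanSpace ℝ (Fin n)) ^ p + t * f v ^ p ∧
      (1 - c*|t|) * suppFn n K (v : EuclideanSpace ℝ (Fin n)) ≤
        (suppFn n K (v : EuclideanSpace ℝ (Fin n)) ^ p + t * f v ^ p) ^ (1/p) ∧
      (suppFn n K (v : EuclideanSpace ℝ (Fin n)) ^ p + t * f v ^ p) ^ (1/p) ≤
        (1 + c*|t|) * suppFn n K (v : EuclideanSpace ℝ (Fin n)) := by
    intro v
    have hwv : ‖(v : EuclideanSpace ℝ (Fin n))‖ = 1 := mem_sphere_zero_iff_norm.mp v.2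
    set h : ℝ := suppFn n K (v : EuclideanSpace ℝ (Fin n)) with hhdef
    have hhpos : 0 < h := lt_of_lt_of_le hr0 (hsupp_lb _ hwv)
    have hhR : h ≤ R := hsupp_ub _ hwv
    have hhr0 : r0 ≤ h := hsupp_lb _ hwv
    have hAp : 0 < h ^ p := Real.rpow_pos_of_pos hhpos p
    have hAb : hb ≤ h ^ p := hhble _ hwv
    have hfp : 0 < f v ^ p := Real.rpow_pos_of_pos (hfpos v) p
    set s : ℝ := t * (f v ^ p / h ^ p) with hsdef
    have hsB : |s| ≤ |t| * B := by
      have h1 : f v ^ p / h ^ p ≤ B := div_le_div₀ hfBpos.le (hfB v) hhbpos hAb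
      rw [hsdef, abs_mul, abs_of_pos (div_pos hfp hAp)]
      exact mul_le_mul_of_nonneg_left h1 (abs_nonneg t)
    have hsabs : |s| ≤ 1/2 := le_trans hsB htB
    have hApne : h ^ p ≠ 0 := hAp.ne'
    have hid : h ^ p + t * f v ^ p = h ^ p * (1 + s) := by
      rw [hsdef]; field_simp
    have h1s : (1:ℝ)/2 ≤ 1 + s ∧ 1 + s ≤ 3/2 := by
      rw [abs_le] at hsabs; constructor <;> linarith [hsabs.1, hsabs.2]
    have hpos1s : (0:ℝ) < 1 + s := by linarith [h1s.1]
    have hpos : 0 < h ^ p + t * f v ^ p := by rw [hid]; exact mul_pos hAp hpos1s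
    refine ⟨hpos, ?_, ?_⟩ <;>
    · have hppow : (h ^ p) ^ (1/p) = h := by
        rw [← Real.rpow_mul hhpos.le, mul_one_div, div_self hp, Real.rpow_one]
      have heq : (h ^ p + t * f v ^ p) ^ (1/p) = h * (1 + s) ^ (1/p) := by
        rw [hid, Real.mul_rpow hAp.le hpos1s.le, hppow]
      have hlips : |(1 + s) ^ (1/p) - 1| ≤ C * |s| := by
        have h2 := hClip (1+s) ⟨h1s.1, h1s.2⟩
        simpa using h2
      have hdiff : |(h ^ p + t * f v ^ p) ^ (1/p) - h| ≤ C₀ * |t| := by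
        rw [heq]
        have h3 : h * (1+s)^(1/p) - h = h * ((1+s)^(1/p) - 1) := by ring
        rw [h3, abs_mul, abs_of_pos hhpos]
        calc h * |(1+s)^(1/p) - 1| ≤ R * (C * |s|) :=
              mul_le_mul hhR hlips (abs_nonneg _) hR.le
          _ ≤ R * (C * (|t| * B)) :=
              mul_le_mul_of_nonneg_left (mul_le_mul_of_nonneg_left hsB hC.le) hR.le
          _ = C₀ * |t| := by rw [hC₀def]; ring
      rw [hc0r0] at hdiff
      have h4 := abs_le.mp hdiff
      have haux : c * |t| * r0 ≤ c * |t| * h :=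
        mul_le_mul_of_nonneg_left hhr0 (mul_nonneg hc.le (abs_nonneg t))
      linarith [h4.1, h4.2, haux]
  refine ⟨fun v => (main v).1, fun v => Real.rpow_pos_of_pos (main v).1 _, ?_, ?_⟩
  · rw [continuous_iff_continuousAt]
    intro v
    apply ContinuousAt.rpow_const
    · apply ContinuousAt.add
      · apply ContinuousAt.rpow_const (hsupp_cont.comp continuous_subtype_val).continuousAt
        exact Or.inl (ne_of_gt (lt_of_lt_of_le hr0 (hsupp_lb _ (mem_sphere_zero_iff_norm.mp v.2))))
      · exact ContinuousAt.mul continuousAt_const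
          (ContinuousAt.rpow_const hfc.continuousAt (Or.inl (ne_of_gt (hfpos v))))
    · exact Or.inl (ne_of_gt (main v).1)
  · intro u
    have hu : ‖(u : EuclideanSpace ℝ (Fin n))‖ = 1 := mem_sphere_zero_iff_norm.mp u.2
    set W : Set (EuclideanSpace ℝ (Fin n)) := wulff n (fun v : unitSphere n =>
      (suppFn n K (v : EuclideanSpace ℝ (Fin n)) ^ p + t * f v ^ p) ^ (1 / p)) with hWdef
    set ρK : ℝ := radialFn n K (u : EuclideanSpace ℝ (Fin n)) with hρKdef
    have hρKlb : r0 ≤ ρK := hradK_lb _ hu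
    have hρKub : ρK ≤ R := hradK_ub _ hu
    have h1mc : (0:ℝ) < 1 - c * |t| := by linarith
    have hpos1c : (0:ℝ) < 1 + c * |t| := by positivity
    have hWsub : ∀ r : ℝ, 0 < r → r • (u : EuclideanSpace ℝ (Fin n)) ∈ K →
        ((1 - c*|t|) * r) • (u : EuclideanSpace ℝ (Fin n)) ∈ W := by
      intro r hr hmem v
      have h1 : ⟪r • (u : EuclideanSpace ℝ (Fin n)), (v : EuclideanSpace ℝ (Fin n))⟫ ≤
          suppFn n K (v : EuclideanSpace ℝ (Fin n)) := hsupp_mem _ _ hmem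
      have h2 := (main v).2.1
      have key : (1 - c*|t|) * ⟪r • (u : EuclideanSpace ℝ (Fin n)), (v : EuclideanSpace ℝ (Fin n))⟫ ≤
          (1 - c*|t|) * suppFn n K (v : EuclideanSpace ℝ (Fin n)) :=
        mul_le_mul_of_nonneg_left h1 h1mc.le
      calc ⟪((1 - c*|t|) * r) • (u : EuclideanSpace ℝ (Fin n)), (v : EuclideanSpace ℝ (Fin n))⟫
          = (1-c*|t|) * ⟪r • (u : EuclideanSpace ℝ (Fin n)), (v : EuclideanSpace ℝ (Fin n))⟫ := by
            rw [real_inner_smul_left, real_inner_smul_left]; ring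
        _ ≤ _ := le_trans key h2
    have hSWub : ∀ r ∈ {r : ℝ | 0 < r ∧ r • (u : EuclideanSpace ℝ (Fin n)) ∈ W},
        r ≤ (1 + c*|t|) * ρK := by
      rintro r ⟨hr, hrW⟩
      have hmem : (r / (1 + c*|t|)) • (u : EuclideanSpace ℝ (Fin n)) ∈ K := by
        apply hmemK
        intro v
        have h2 := (main v).2.2
        have h4 : ⟪r • (u : EuclideanSpace ℝ (Fin n)), (v : EuclideanSpace ℝ (Fin n))⟫ ≤
            (1 + c*|t|) * suppFn n K (v : EuclideanSpace ℝ (Fin n)) := le_trans (hrW v) h2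
        have h5 : ⟪(r / (1 + c*|t|)) • (u : EuclideanSpace ℝ (Fin n)), (v : EuclideanSpace ℝ (Fin n))⟫
            = ⟪r • (u : EuclideanSpace ℝ (Fin n)), (v : EuclideanSpace ℝ (Fin n))⟫ / (1 + c*|t|) := by
          rw [real_inner_smul_left, real_inner_smul_left]; ring
        rw [h5, div_le_iff₀ hpos1c]
        linarith
      have h6 : r / (1 + c*|t|) ≤ ρK :=
        le_csSup ⟨R, hradS _ hu⟩ ⟨div_pos hr hpos1c, hmem⟩
      rw [div_le_iff₀ hpos1c] at h6
      linarith
    have hSWne : ((1 - c*|t|) * r0) ∈ {r : ℝ | 0 < r ∧ r • (u : EuclideanSpace ℝ (Fin n)) ∈ W} :=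
      ⟨mul_pos h1mc hr0, hWsub r0 hr0 (hradmem _ hu).2⟩
    have hρWub : radialFn n W (u : EuclideanSpace ℝ (Fin n)) ≤ (1 + c*|t|) * ρK :=
      csSup_le ⟨_, hSWne⟩ hSWub
    have hρWlb : (1 - c*|t|) * ρK ≤ radialFn n W (u : EuclideanSpace ℝ (Fin n)) := by
      have hbddW : BddAbove {r : ℝ | 0 < r ∧ r • (u : EuclideanSpace ℝ (Fin n)) ∈ W} :=
        ⟨(1 + c*|t|)*ρK, hSWub⟩
      have h7 : ∀ r ∈ {r : ℝ | 0 < r ∧ r • (u : EuclideanSpace ℝ (Fin n)) ∈ K},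
          r ≤ radialFn n W (u : EuclideanSpace ℝ (Fin n)) / (1 - c*|t|) := by
        rintro r ⟨hr, hmem⟩
        have h8 : (1 - c*|t|) * r ≤ radialFn n W (u : EuclideanSpace ℝ (Fin n)) :=
          le_csSup hbddW ⟨mul_pos h1mc hr, hWsub r hr hmem⟩
        rw [le_div_iff₀ h1mc]
        linarith
      have h9 : ρK ≤ radialFn n W (u : EuclideanSpace ℝ (Fin n)) / (1 - c*|t|) :=
        csSup_le ⟨r0, hradmem _ hu⟩ h7
      rw [le_div_iff₀ h1mc] at h9
      linarith
    have haux : c * |t| * ρK ≤ c * |t| * R :=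
      mul_le_mul_of_nonneg_left hρKub (by positivity)
    rw [abs_le]
    constructor
    · linarith [hρWlb, haux]
    · linarith [hρWub, haux]
end
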